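/- arXiv:2204.07916 — 2 statements merged into one kernel-verified Lean document; each statement's English description precedes it below -/
import Mathlib

section
/- In a Wheeler graph, for any pattern P (a string over the edge-label alphabet), the set of vertices reachable by paths labelled P forms a (possibly empty) contiguous interval in the Wheeler order. -/
/-! Induction on `P` from the right. If `u ≤ v ≤ w` and `u`, `w` are reached by `Q ++ [a]` through
edges `u' -a→ u` and `w' -a→ w`, then axiom (1) gives `v` an in-edge `v' -b→ v`, axiom (2) forces
`b = a`, and axiom (3) shows that either `v` coincides with `u` or `w`, or `u' ≤ v' ≤ w'`; in the
last case `v'` is reached by `Q` by induction. -/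

/-- Directed paths from `u` to `w` whose consecutive edge labels spell the list `P`. -/
inductive PathLabelled {V A : Type} (E : V → A → V → Prop) : V → List A → V → Prop
  | nil (v : V) : PathLabelled E v [] v
  | cons {u : V} {a : A} {v w : V} {P : List A} :
      E u a v → PathLabelled E v P w → PathLabelled E u (a :: P) w

namespace PathLabelled

variable {V A : Type} {E : V → A → V → Prop}

lemma snoc {s t u : V} {Q : List A} {a : A} (h : PathLabelled E s Q t) (e : E t a u) :
    PathLabelled E s (Q ++ [a]) u := by
  induction h with
  | nil => exact .cons e (.nil u)
  | cons e' _ ih => exact .cons e' (ih e)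

lemma exists_of_append_singleton {s u : V} {Q : List A} {a : A}
    (h : PathLabelled E s (Q ++ [a]) u) : ∃ t, PathLabelled E s Q t ∧ E t a u := by
  induction Q generalizing s with
  | nil =>
    obtain _ | ⟨e, _ | _⟩ := h
    exact ⟨s, .nil s, e⟩
  | cons b Q ih =>
    obtain _ | ⟨e, h'⟩ := h
    obtain ⟨t, p, e'⟩ := ih h'
    exact ⟨t, .cons e p, e'⟩

end PathLabelled

section Wheeler

variable {V A : Type} [LinearOrder V] {E : V → A → V → Prop}

lemma exists_inEdge_of_le
    (h1 : ∀ u v : V, (∃ w a, E w a u) → ¬ (∃ w a, E w a v) → v < u)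
    {u v : V} (huv : u ≤ v) (hu : ∃ w a, E w a u) : ∃ w a, E w a v := by
  by_contra hv
  exact (h1 u v hu hv).not_ge huv

lemma inLabel_eq_of_between [LinearOrder A]
    (h2 : ∀ (u v : V) (a b : A), (∃ w, E w a u) → (∃ w, E w b v) → a < b → u < v)
    {u v w u' v' w' : V} {a b : A} (huv : u ≤ v) (hvw : v ≤ w)
    (eu : E u' a u) (ev : E v' b v) (ew : E w' a w) : b = a := by
  rcases lt_trichotomy b a with hlt | heq | hgt
  · exact absurd (h2 v u b a ⟨v', ev⟩ ⟨u', eu⟩ hlt) huv.not_gt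
  · exact heq
  · exact absurd (h2 w v a b ⟨w', ew⟩ ⟨v', ev⟩ hgt) hvw.not_gt

lemma eq_or_source_between_or_eq
    (h3 : ∀ (u v w x : V) (a : A), E u a v → E w a x → u < w → v ≤ x)
    {u v w u' v' w' : V} {a : A} (huv : u ≤ v) (hvw : v ≤ w)
    (eu : E u' a u) (ev : E v' a v) (ew : E w' a w) :
    v = u ∨ (u' ≤ v' ∧ v' ≤ w') ∨ v = w := by
  rcases lt_or_ge v' u' with hlt | hge
  · exact .inl (le_antisymm (h3 v' v u' u a ev eu hlt) huv)
  rcases le_or_gt v' w' with hle | hgt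
  · exact .inr (.inl ⟨hge, hle⟩)
  · exact .inr (.inr (le_antisymm hvw (h3 w' w v' v a ew ev hgt)))

theorem exists_pathLabelled_of_between [LinearOrder A]
    (h1 : ∀ u v : V, (∃ w a, E w a u) → ¬ (∃ w a, E w a v) → v < u)
    (h2 : ∀ (u v : V) (a b : A), (∃ w, E w a u) → (∃ w, E w b v) → a < b → u < v)
    (h3 : ∀ (u v w x : V) (a : A), E u a v → E w a x → u < w → v ≤ x)
    (P : List A) {u v w : V} (huv : u ≤ v) (hvw : v ≤ w)
    (hu : ∃ s, PathLabelled E s P u) (hw : ∃ s, PathLabelled E s P w) :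
    ∃ s, PathLabelled E s P v := by
  induction P using List.reverseRecOn generalizing u v w with
  | nil => exact ⟨v, .nil v⟩
  | append_singleton Q a ih =>
    obtain ⟨su, pu⟩ := hu
    obtain ⟨sw, pw⟩ := hw
    obtain ⟨u', pu', eu⟩ := pu.exists_of_append_singleton
    obtain ⟨w', pw', ew⟩ := pw.exists_of_append_singleton
    obtain ⟨v', b, ev⟩ := exists_inEdge_of_le h1 huv ⟨u', a, eu⟩
    obtain rfl := inLabel_eq_of_between h2 huv hvw eu ev ew
    rcases eq_or_source_between_or_eq h3 huv hvw eu ev ew with rfl | ⟨hu', hw'⟩ | rfl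
    · exact ⟨su, pu⟩
    · obtain ⟨s, p⟩ := ih hu' hw' ⟨su, pu'⟩ ⟨sw, pw'⟩
      exact ⟨s, p.snoc ev⟩
    · exact ⟨sw, pw⟩

end Wheeler

/-- In a Wheeler graph, the vertices reachable by paths labelled `P` form a
contiguous interval in the Wheeler order. -/
theorem wheeler_reachable_interval {n : ℕ} {A : Type} [LinearOrder A]
    (E : Fin n → A → Fin n → Prop)
    (h1 : ∀ u v : Fin n, (∃ w a, E w a u) → ¬ (∃ w a, E w a v) → v < u)
    (h2 : ∀ (u v : Fin n) (a b : A),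
      (∃ w, E w a u) → (∃ w, E w b v) → a < b → u < v)
    (h3 : ∀ (u v w x : Fin n) (a : A), E u a v → E w a x → u < w → v ≤ x)
    (P : List A) (u v w : Fin n) (huv : u ≤ v) (hvw : v ≤ w)
    (hu : ∃ s, PathLabelled E s P u) (hw : ∃ s, PathLabelled E s P w) :
    ∃ s, PathLabelled E s P v :=
  exists_pathLabelled_of_between h1 h2 h3 P huv hvw hu hw
end

section
/- Let S be a sequence of n integers whose first m entries are 0 and whose remaining entries are positive, and let S' be S with its leading m zeros deleted. Then (n−m)·H_k(S') ≤ n·H_k(S) for every k ≥ 0. -/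
/-! For `k = 0`, prepending zeros lengthens the sequence without changing the count of any symbol
of `T`, so every summand `n_c · log₂(n / n_c)` can only grow, and the new symbol `0` adds a
nonnegative summand. For `k ≥ 1`, every context `w` of `T` consists of positive symbols, so it
cannot occur at a position starting in the block of zeros; hence the symbols following `w` are
the same in `T` and in `0^m T`, and `0^m T` merely has additional contexts, each contributing a
nonnegative amount. -/

/-- Zeroth-order empirical entropy, multiplied by the length of the sequence:
`|T| · H₀(T) = Σ_c n_c · log₂(|T| / n_c)`. -/
noncomputable def nH0 (T : List ℕ) : ℝ :=
  ∑ c ∈ T.toFinset, (T.count c : ℝ) * Real.logb 2 ((T.length : ℝ) / (T.count c : ℝ))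

/-- The sequence of characters immediately following the occurrences of the
length-`k` context `w` in `S`. -/
def ctxFollow (S : List ℕ) (k : ℕ) (w : List ℕ) : List ℕ :=
  ((List.range (S.length - k)).filter (fun i => decide ((S.drop i).take k = w))).map
    (fun i => S.getD (i + k) 0)

/-- `k`-th order empirical entropy multiplied by the length of the sequence:
`n · H_k(S) = Σ_w |S_w| · H₀(S_w)`, summing over the length-`k` contexts `w`
occurring in `S`. -/
noncomputable def nHk (S : List ℕ) (k : ℕ) : ℝ :=
  ∑ w ∈ ((List.range (S.length - k)).map (fun i => (S.drop i).take k)).toFinset,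
    nH0 (ctxFollow S k w)

lemma count_mul_logb_length_div_count_nonneg (L : List ℕ) (c : ℕ) :
    0 ≤ (L.count c : ℝ) * Real.logb 2 ((L.length : ℝ) / (L.count c : ℝ)) := by
  rcases Nat.eq_zero_or_pos (L.count c) with h | h
  · simp [h]
  · have hc : (0 : ℝ) < L.count c := by exact_mod_cast h
    refine mul_nonneg hc.le (Real.logb_nonneg one_lt_two ?_)
    rw [le_div_iff₀ hc, one_mul]
    exact_mod_cast List.count_le_length

lemma nH0_nonneg (T : List ℕ) : 0 ≤ nH0 T :=
  Finset.sum_nonneg fun c _ => count_mul_logb_length_div_count_nonneg T c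

lemma nH0_le_nH0_append {L T : List ℕ} (h : ∀ c ∈ T, c ∉ L) :
    nH0 T ≤ nH0 (L ++ T) := by
  have hcount : ∀ c ∈ T.toFinset, (L ++ T).count c = T.count c := fun c hc => by
    rw [List.count_append, List.count_eq_zero_of_not_mem (h c (List.mem_toFinset.mp hc)),
      zero_add]
  have hsub : T.toFinset ⊆ (L ++ T).toFinset := fun c hc => by
    simp only [List.mem_toFinset] at hc ⊢
    exact List.mem_append_right L hc
  calc nH0 T
      ≤ ∑ c ∈ T.toFinset,
          (T.count c : ℝ) * Real.logb 2 (((L ++ T).length : ℝ) / (T.count c : ℝ)) := by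
        refine Finset.sum_le_sum fun c hc => mul_le_mul_of_nonneg_left ?_ (by positivity)
        have hc : (0 : ℝ) < T.count c := by
          exact_mod_cast List.count_pos_iff.mpr (List.mem_toFinset.mp hc)
        have hT : (T.count c : ℝ) ≤ T.length := by exact_mod_cast List.count_le_length
        refine Real.logb_le_logb_of_le one_lt_two (div_pos (hc.trans_le hT) hc) ?_
        gcongr
        simp
    _ = ∑ c ∈ T.toFinset, ((L ++ T).count c : ℝ) *
          Real.logb 2 (((L ++ T).length : ℝ) / ((L ++ T).count c : ℝ)) :=
        Finset.sum_congr rfl fun c hc => by rw [hcount c hc]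
    _ ≤ nH0 (L ++ T) :=
        Finset.sum_le_sum_of_subset_of_nonneg hsub fun c _ _ =>
          count_mul_logb_length_div_count_nonneg (L ++ T) c

def contexts (S : List ℕ) (k : ℕ) : Finset (List ℕ) :=
  ((List.range (S.length - k)).map (fun i => (S.drop i).take k)).toFinset

lemma nHk_eq_sum_contexts (S : List ℕ) (k : ℕ) :
    nHk S k = ∑ w ∈ contexts S k, nH0 (ctxFollow S k w) := rfl

lemma mem_contexts {S w : List ℕ} {k : ℕ} :
    w ∈ contexts S k ↔ ∃ i < S.length - k, (S.drop i).take k = w := by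
  simp [contexts]

lemma mem_of_mem_of_mem_contexts {S w : List ℕ} {k x : ℕ} (hw : w ∈ contexts S k)
    (hx : x ∈ w) : x ∈ S := by
  obtain ⟨i, -, rfl⟩ := mem_contexts.mp hw
  exact List.mem_of_mem_drop (List.mem_of_mem_take hx)

lemma lt_length_of_mem_contexts {S w : List ℕ} {k : ℕ} (hw : w ∈ contexts S k) :
    k < S.length := by
  obtain ⟨i, hi, -⟩ := mem_contexts.mp hw
  omega

lemma contexts_subset_contexts_append (L T : List ℕ) (k : ℕ) :
    contexts T k ⊆ contexts (L ++ T) k := fun w hw => by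
  obtain ⟨i, hi, rfl⟩ := mem_contexts.mp hw
  refine mem_contexts.mpr ⟨L.length + i, ?_, by rw [List.drop_length_add_append]⟩
  simp only [List.length_append]
  omega

lemma contexts_zero {S : List ℕ} (hS : S ≠ []) : contexts S 0 = {[]} := by
  simp [contexts, List.map_const', List.toFinset_replicate_of_ne_zero, hS]

lemma ctxFollow_zero (S : List ℕ) : ctxFollow S 0 [] = S := by
  refine List.ext_getElem (by simp [ctxFollow]) fun i _ hi => ?_
  simp [ctxFollow, hi]

lemma nHk_zero (S : List ℕ) : nHk S 0 = nH0 S := by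
  rcases eq_or_ne S [] with rfl | hS
  · simp [nHk, nH0]
  · rw [nHk_eq_sum_contexts, contexts_zero hS, Finset.sum_singleton, ctxFollow_zero]

lemma ctxFollow_append {L T w : List ℕ} {k : ℕ} (hk : k ≤ T.length)
    (h : ∀ i < L.length, ((L ++ T).drop i).take k ≠ w) :
    ctxFollow (L ++ T) k w = ctxFollow T k w := by
  have hlen : (L ++ T).length - k = L.length + (T.length - k) := by
    simp only [List.length_append]
    omega
  have hL : (List.range L.length).filter (fun i => decide (((L ++ T).drop i).take k = w)) = [] :=
    List.filter_eq_nil_iff.mpr fun i hi => by simpa using h i (List.mem_range.mp hi)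
  rw [ctxFollow, hlen, List.range_add, List.filter_append, hL, List.nil_append,
    List.filter_map, List.map_map]
  simp only [ctxFollow, Function.comp_def, List.drop_length_add_append, add_assoc]
  congr 1
  funext i
  rw [List.getD_append_right] <;> simp

lemma nHk_le_nHk_append {L T : List ℕ} {k : ℕ}
    (h : ∀ w ∈ contexts T k, ∀ i < L.length, ((L ++ T).drop i).take k ≠ w) :
    nHk T k ≤ nHk (L ++ T) k := by
  rw [nHk_eq_sum_contexts, nHk_eq_sum_contexts]
  calc ∑ w ∈ contexts T k, nH0 (ctxFollow T k w)
      = ∑ w ∈ contexts T k, nH0 (ctxFollow (L ++ T) k w) :=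
        Finset.sum_congr rfl fun w hw => by
          rw [ctxFollow_append (lt_length_of_mem_contexts hw).le (h w hw)]
    _ ≤ ∑ w ∈ contexts (L ++ T) k, nH0 (ctxFollow (L ++ T) k w) :=
        Finset.sum_le_sum_of_subset_of_nonneg (contexts_subset_contexts_append L T k)
          fun w _ _ => nH0_nonneg _

lemma getElem_mem_take_succ_drop {α : Type*} {S : List α} {i : ℕ} (k : ℕ)
    (hi : i < S.length) : S[i] ∈ (S.drop i).take (k + 1) := by
  rw [List.drop_eq_getElem_cons hi, List.take_succ_cons]
  exact List.mem_cons_self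

/-- If `S` consists of `m` leading zeros followed by a sequence `T` of positive
integers, then deleting the leading zeros does not increase the `k`-th order
empirical entropy times the length: `(n−m)·H_k(S') ≤ n·H_k(S)`. -/
theorem nHk_drop_leading_zeros_le (m k : ℕ) (T : List ℕ) (hT : ∀ x ∈ T, 0 < x) :
    nHk T k ≤ nHk (List.replicate m 0 ++ T) k := by
  cases k with
  | zero =>
    rw [nHk_zero, nHk_zero]
    exact nH0_le_nH0_append fun c hc h0 => (hT c hc).ne' (List.eq_of_mem_replicate h0)
  | succ k =>
    refine nHk_le_nHk_append fun w hw i hi hwindow => ?_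
    have hi' : i < (List.replicate m 0 ++ T).length := by
      simp only [List.length_append]
      omega
    have hzero : (List.replicate m 0 ++ T)[i] = 0 := by
      simp only [List.length_replicate] at hi
      simp [List.getElem_append_left, hi]
    have h0w : 0 ∈ w := by
      have := getElem_mem_take_succ_drop k hi'
      rwa [hzero, hwindow] at this
    exact (hT 0 (mem_of_mem_of_mem_contexts hw h0w)).false
end
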